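/- arXiv:quant-ph/0610151 — 5 statements merged into one kernel-verified Lean document; each statement's English description precedes it below -/
import Mathlib

section
/- Applying the two-qubit operation X_ad ⊗ X_ad, where X_ad = |0⟩⟨00| + |1⟩⟨11|, to the tensor product of two Bell states satisfies (X_ad ⊗ X_ad)(|Φ_{i,j}⟩ ⊗ |Φ_{k,l}⟩) = (1/√2) δ_{i,k} |Φ_{i, j⊕l}⟩, where |Φ_{ij}⟩ = (|0, 0⊕i⟩ + (−1)^j |1, 1⊕i⟩)/√2 and ⊕ denotes addition modulo 2. -/
/-- The Bell state `|Φ_{ij}⟩ = (|0, 0⊕i⟩ + (−1)^j |1, 1⊕i⟩)/√2`, as a vector on ℂ²⊗ℂ²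
indexed by pairs `(a,b)` of qubit basis labels. -/
noncomputable def bell (i j : ZMod 2) : ZMod 2 × ZMod 2 → ℂ :=
  fun p => (if p.2 = p.1 + i then (-1 : ℂ) ^ (j.val * p.1.val) else 0) / Real.sqrt 2

/-- The advantage-distillation operator `X_ad = |0⟩⟨0,0| + |1⟩⟨1,1|`, as a matrix
from two qubits to one qubit. -/
noncomputable def Xad : ZMod 2 → (ZMod 2 × ZMod 2) → ℂ :=
  fun b p => if p.1 = b ∧ p.2 = b then 1 else 0

/-- Sum over `ZMod 2` expands to the two terms. -/
lemma sum_zmod2 {M} [AddCommMonoid M] (f : ZMod 2 → M) : ∑ x, f x = f 0 + f 1 := by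
  rw [show (Finset.univ : Finset (ZMod 2)) = {0,1} by decide]
  simp

/-- Case analysis for `ZMod 2`. -/
lemma cases2 (x : ZMod 2) : x = 0 ∨ x = 1 := by
  revert x; decide

set_option maxHeartbeats 2000000 in
/-- `(X_ad ⊗ X_ad)(|Φ_{i,j}⟩ ⊗ |Φ_{k,l}⟩) = (1/√2) δ_{i,k} |Φ_{i, j⊕l}⟩`, where the first
factor of `X_ad ⊗ X_ad` acts on Alice's two qubits `(a₁,a₂)` and the second on Bob's two
qubits `(b₁,b₂)`, with pair 1 = `(a₁,b₁)` in state `|Φ_{i,j}⟩` and pair 2 = `(a₂,b₂)` in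
state `|Φ_{k,l}⟩`. -/
theorem advantage_distillation_on_bell_states (i j k l : ZMod 2) :
    (fun q : ZMod 2 × ZMod 2 =>
      ∑ a1 : ZMod 2, ∑ a2 : ZMod 2, ∑ b1 : ZMod 2, ∑ b2 : ZMod 2,
        Xad q.1 (a1, a2) * Xad q.2 (b1, b2) * (bell i j (a1, b1) * bell k l (a2, b2)))
    = fun q : ZMod 2 × ZMod 2 =>
        (if i = k then 1 else 0) * ((1 : ℂ) / Real.sqrt 2) * bell i (j + l) q := by
  have hs : (Real.sqrt 2 : ℂ) * Real.sqrt 2 = 2 := by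
    exact_mod_cast congrArg (Complex.ofReal) (Real.mul_self_sqrt (by norm_num : (0:ℝ) ≤ 2))
  funext q
  obtain ⟨q1, q2⟩ := q
  simp only [sum_zmod2]
  rcases cases2 i with rfl | rfl <;> rcases cases2 j with rfl | rfl <;>
    rcases cases2 k with rfl | rfl <;> rcases cases2 l with rfl | rfl <;>
    rcases cases2 q1 with rfl | rfl <;> rcases cases2 q2 with rfl | rfl <;>
    simp [bell, Xad, show (1+1:ZMod 2) = 0 by decide] <;>
    field_simp <;> ring_nf <;> simp [hs]
end

section
/- Let λ = (λ_{00}, λ_{01}, λ_{10}, λ_{11}) be a probability distribution and define Q = λ_{10} + λ_{11}. For m ≥ 1, define λ'_{i,j} = [ (λ_{i,0} + λ_{i,1})^m + (−1)^j (λ_{i,0} − λ_{i,1})^m ] / T with T = 2[(1−Q)^m + Q^m]. Then (λ'_{ij}) is a probability distribution (nonnegative entries summing to 1), and the new error rate Q' = λ'_{10} + λ'_{11} equals Q^m / ((1−Q)^m + Q^m). -/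
lemma ad_abs_pow_le (a b : ℝ) (ha : 0 ≤ a) (hb : 0 ≤ b) (m : ℕ) :
    |(a - b) ^ m| ≤ (a + b) ^ m := by
  rw [abs_pow]
  exact pow_le_pow_left₀ (abs_nonneg _) (by rw [abs_le]; constructor <;> linarith) m

/-- Advantage distillation on blocks of `m` identical Bell-diagonal pairs: the
post-selected eigenvalues `λ'_{i,j} = [(λ_{i,0}+λ_{i,1})^m + (−1)^j (λ_{i,0}−λ_{i,1})^m]/T`
with `T = 2[(1−Q)^m + Q^m]` form a probability distribution, and the new error rate
`Q' = λ'_{10} + λ'_{11}` equals `Q^m / ((1−Q)^m + Q^m)`. -/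
theorem advantage_distillation_eigenvalues
    (l00 l01 l10 l11 : ℝ) (m : ℕ) (hm : 1 ≤ m)
    (h00 : 0 ≤ l00) (h01 : 0 ≤ l01) (h10 : 0 ≤ l10) (h11 : 0 ≤ l11)
    (hsum : l00 + l01 + l10 + l11 = 1)
    (Q : ℝ) (hQ : Q = l10 + l11)
    (T : ℝ) (hT : T = 2 * ((1 - Q) ^ m + Q ^ m))
    (l00' l01' l10' l11' : ℝ)
    (h00' : l00' = ((l00 + l01) ^ m + (l00 - l01) ^ m) / T)
    (h01' : l01' = ((l00 + l01) ^ m - (l00 - l01) ^ m) / T)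
    (h10' : l10' = ((l10 + l11) ^ m + (l10 - l11) ^ m) / T)
    (h11' : l11' = ((l10 + l11) ^ m - (l10 - l11) ^ m) / T) :
    (0 ≤ l00' ∧ 0 ≤ l01' ∧ 0 ≤ l10' ∧ 0 ≤ l11') ∧
    l00' + l01' + l10' + l11' = 1 ∧
    l10' + l11' = Q ^ m / ((1 - Q) ^ m + Q ^ m) := by
  have hQ0 : 0 ≤ Q := by rw [hQ]; linarith
  have hQ1 : 1 - Q = l00 + l01 := by rw [hQ]; linarith
  have hden : 0 < (1 - Q) ^ m + Q ^ m := by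
    rcases le_or_gt Q (1/2) with h | h
    · have : 0 < (1 - Q) ^ m := pow_pos (by linarith) m
      have : 0 ≤ Q ^ m := pow_nonneg hQ0 m
      linarith
    · have : 0 < Q ^ m := pow_pos (by linarith) m
      have : 0 ≤ (1 - Q) ^ m := pow_nonneg (by linarith) m
      linarith
  have hT0 : 0 < T := by rw [hT]; linarith
  have hTne : T ≠ 0 := ne_of_gt hT0
  have habs0 := ad_abs_pow_le l00 l01 h00 h01 m
  have habs1 := ad_abs_pow_le l10 l11 h10 h11 m
  have hA := abs_le.mp habs0
  have hB := abs_le.mp habs1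
  refine ⟨⟨?_, ?_, ?_, ?_⟩, ?_, ?_⟩
  · rw [h00']; apply div_nonneg _ hT0.le; linarith [hA.1]
  · rw [h01']; apply div_nonneg _ hT0.le; linarith [hA.2]
  · rw [h10']; apply div_nonneg _ hT0.le; linarith [hB.1]
  · rw [h11']; apply div_nonneg _ hT0.le; linarith [hB.2]
  · rw [h00', h01', h10', h11']
    field_simp
    rw [hT, hQ1, hQ]; ring
  · rw [h10', h11']
    rw [← add_div]
    have : (l10 + l11) ^ m + (l10 - l11) ^ m + ((l10 + l11) ^ m - (l10 - l11) ^ m)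
        = 2 * Q ^ m := by rw [hQ]; ring
    rw [this, hT, mul_div_mul_left _ _ (two_ne_zero)]
end

section
/- For the BB84 protocol over a depolarizing channel with fidelity F, disturbance D = 1 − F, overall transmission η, and no-dark-count probability p̄_d per detector: the probability of a wrong outcome after randomly assigning double clicks satisfies Y_n Q_n = (1/2) Σ_{k=0}^n C(n,k) F^k D^{n−k} [ p̄_d(1−η)^k (1 − p̄_d(1−η)^{n−k}) + (1/2)(1 − p̄_d(1−η)^k)(1 − p̄_d(1−η)^{n−k}) ] = (1/4)[ 1 + p̄_d(1 − Fη)^n − p̄_d(1 − Dη)^n − p̄_d²(1 − η)^n ]. -/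
/-!
Expanding the bracket turns the summand into `½ (1 + p̄_d a − p̄_d b − p̄_d² a b)` with
`a = (1 − η)^k`, `b = (1 − η)^(n−k)`. Each of the four resulting sums is a binomial
expansion `∑ C(n,k) (F x)^k (D y)^(n−k) = (F x + D y)^n`, and `F + D = 1` evaluates the
four bases `F + D`, `F(1 − η) + D`, `F + D(1 − η)`, `(F + D)(1 − η)`.
-/

open Finset

theorem sum_range_choose_mul_pow_mul_pow {R : Type*} [CommSemiring R] (n : ℕ) (F D x y : R) :
    ∑ k ∈ range (n + 1), (n.choose k : R) * F ^ k * D ^ (n - k) * (x ^ k * y ^ (n - k))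
      = (F * x + D * y) ^ n := by
  rw [add_pow]
  refine sum_congr rfl fun k _ => ?_
  rw [mul_pow, mul_pow]
  ring

/-- BB84 over a depolarizing channel: binomial-sum identity for the wrong-outcome
probability `Y_n Q_n` with fidelity `F`, disturbance `D = 1 − F`, transmission `η`,
and no-dark-count probability `p̄_d` per detector. -/
theorem bb84_wrong_outcome_binomial_identity
    (n : ℕ) (F D η pd : ℝ) (hFD : F + D = 1) :
    (1 / 2 : ℝ) * ∑ k ∈ Finset.range (n + 1),
        (n.choose k : ℝ) * F ^ k * D ^ (n - k) *
          (pd * (1 - η) ^ k * (1 - pd * (1 - η) ^ (n - k))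
            + (1 / 2) * (1 - pd * (1 - η) ^ k) * (1 - pd * (1 - η) ^ (n - k)))
    = (1 / 4) * (1 + pd * (1 - F * η) ^ n - pd * (1 - D * η) ^ n
        - pd ^ 2 * (1 - η) ^ n) := by
  set w : ℕ → ℝ := fun k => (n.choose k : ℝ) * F ^ k * D ^ (n - k)
  have expand : ∀ k ∈ range (n + 1),
      w k * (pd * (1 - η) ^ k * (1 - pd * (1 - η) ^ (n - k))
        + (1 / 2) * (1 - pd * (1 - η) ^ k) * (1 - pd * (1 - η) ^ (n - k)))
      = (1 / 2) * (w k * (1 ^ k * 1 ^ (n - k)) + pd * (w k * ((1 - η) ^ k * 1 ^ (n - k)))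
          - pd * (w k * (1 ^ k * (1 - η) ^ (n - k)))
          - pd ^ 2 * (w k * ((1 - η) ^ k * (1 - η) ^ (n - k)))) := by
    intro k _
    ring
  rw [sum_congr rfl expand, ← mul_sum]
  simp only [sum_add_distrib, sum_sub_distrib, ← mul_sum, w, sum_range_choose_mul_pow_mul_pow]
  obtain rfl : D = 1 - F := by linarith
  ring
end

section
/- Let ρ_n be the symmetric state P_S(P_{Φ00}^{⊗n₁} ⊗ P_{Φ01}^{⊗n₂} ⊗ P_{Φ10}^{⊗n₃} ⊗ P_{Φ11}^{⊗n₄}) on n = n₁+n₂+n₃+n₄ qubit pairs (uniform average over permutations of the pairs), and let σ be the Bell-diagonal two-qubit state with eigenvalues nᵢ/n. Then σ^{⊗n} = p ρ_n + (1−p) ρ̃_n where p = multinomial(n; n₁,n₂,n₃,n₄) · Π_i (nᵢ/n)^{nᵢ} and ρ̃_n is a positive semidefinite operator of trace 1. Moreover p ≥ 1/(n+1)³ (in particular p ≥ 1/n³ for n ≥ 2, and the weaker bound p ≥ 1/n^O(1) holds). -/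
/-! In the Bell basis both states are diagonal. On a string of type `c` the entry of `σ^{⊗n}`
is `∏ᵢ (nᵢ/n)^{nᵢ}`, which is exactly `p` times the entry `1/multinomial(n; c)` of `ρ_n`, and
`ρ_n` vanishes on all other strings. Hence `σ^{⊗n} - p ρ_n` is positive semidefinite of trace
`1 - p`, and normalising it gives `ρ̃_n`. For the bound, `p` is the mode of the multinomial
distribution with cell probabilities `nᵢ/n` (by `a! a^b ≤ b! a^a`), so it is at least the
average `1/binom(n+3, 3)` of its `binom(n+3, 3) ≤ (n+1)³` probabilities. -/

open Matrix

/-- The type (frequency vector) of a string `w` of `n` Bell labels. -/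
def typeOf {n : ℕ} (w : Fin n → Fin 4) : Fin 4 → ℕ :=
  fun i => (Finset.univ.filter fun j => w j = i).card

/-- The symmetrized state `ρ_n = P_S(P_{Φ00}^{⊗n₁} ⊗ ⋯ ⊗ P_{Φ11}^{⊗n₄})`, written in the
Bell basis: the uniform mixture of the projectors onto all Bell-basis strings of type
`c = (n₁,…,n₄)`; each such string carries weight `(∏ᵢ nᵢ!)/n!`. -/
noncomputable def rhoSym (n : ℕ) (c : Fin 4 → ℕ) :
    Matrix (Fin n → Fin 4) (Fin n → Fin 4) ℝ :=
  Matrix.diagonal fun w =>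
    if typeOf w = c then ((∏ i, (c i).factorial : ℕ) : ℝ) / (n.factorial : ℝ) else 0

/-- The i.i.d. state `σ^{⊗n}` in the Bell basis, where `σ` is Bell-diagonal with
eigenvalues `nᵢ/n`. -/
noncomputable def sigmaPow (n : ℕ) (c : Fin 4 → ℕ) :
    Matrix (Fin n → Fin 4) (Fin n → Fin 4) ℝ :=
  Matrix.diagonal fun w => ∏ j, ((c (w j) : ℝ) / (n : ℝ))

open Finset Nat

theorem Finset.prod_comp_eq_prod_pow_card_fiber {α ι M : Type*} [Fintype α] [Fintype ι]
    [DecidableEq ι] [CommMonoid M] (f : ι → M) (w : α → ι) :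
    ∏ j, f (w j) = ∏ i, f i ^ #{j | w j = i} := by
  simp_rw [← prod_fiberwise' univ w f, prod_const]

theorem Finset.card_piAntidiag_univ {ι : Type*} [Fintype ι] [DecidableEq ι] (n : ℕ) :
    #(piAntidiag (univ : Finset ι) n) = (Fintype.card ι + n - 1).choose n := by
  rw [← map_sym_eq_piAntidiag, card_map, sym_univ, card_univ, Sym.card_sym_eq_choose]

/-- Coefficient extraction at `X^c` in `(∑ i, X i) ^ |α| = ∑ w, ∏ j, X (w j)`. -/
theorem card_filter_fiberCard_eq_multinomial {α ι : Type*} [Fintype α] [DecidableEq α]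
    [Fintype ι] [DecidableEq ι] (c : ι → ℕ) (hc : ∑ i, c i = Fintype.card α) :
    #{w : α → ι | (fun i ↦ #{j | w j = i}) = c} = multinomial univ c := by
  have hexpand : (∑ i, MvPolynomial.X i : MvPolynomial ι ℕ) ^ Fintype.card α =
      ∑ w : α → ι, ∏ i, MvPolynomial.X i ^ #{j | w j = i} := by
    rw [← Finset.card_univ, ← prod_const, prod_univ_sum, Fintype.piFinset_univ]
    simp_rw [prod_comp_eq_prod_pow_card_fiber]
  have hcoeff := congrArg (MvPolynomial.coeff (Finsupp.equivFunOnFinite.symm c)) hexpand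
  have hindicator : ∀ t : ι → ℕ,
      Finsupp.equivFunOnFinite.symm c = Finsupp.indicator univ (fun i _ ↦ t i) ↔ t = c := by
    intro t
    rw [eq_comm, Finsupp.ext_iff, funext_iff]
    simp
  rw [MvPolynomial.coeff_sum_X_pow_of_fintype, MvPolynomial.coeff_sum, Finsupp.sum_fintype _ _
    fun _ ↦ rfl, Finsupp.coe_equivFunOnFinite_symm, if_pos hc,
    Finsupp.multinomial_eq_of_support_subset (subset_univ _),
    Finsupp.coe_equivFunOnFinite_symm] at hcoeff
  simp only [MvPolynomial.coeff_prod_X_pow, hindicator, sum_boole] at hcoeff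
  exact_mod_cast hcoeff.symm

theorem Nat.factorial_mul_pow_le_factorial_mul_pow (a b : ℕ) :
    a ! * a ^ b ≤ b ! * a ^ a := by
  rcases le_total a b with hab | hba
  · calc a ! * a ^ b = a ! * a ^ (b - a) * a ^ a := by
          rw [mul_assoc, ← pow_add, Nat.sub_add_cancel hab]
      _ ≤ b ! * a ^ a := Nat.mul_le_mul_right _ (factorial_mul_pow_sub_le_factorial hab)
  · obtain ⟨k, rfl⟩ := Nat.exists_eq_add_of_le hba
    calc (b + k)! * (b + k) ^ b = b ! * (b + 1).ascFactorial k * (b + k) ^ b := by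
          rw [factorial_mul_ascFactorial]
      _ ≤ b ! * (b + k) ^ k * (b + k) ^ b := by
          gcongr; exact ascFactorial_le_pow_add b k
      _ = b ! * (b + k) ^ (b + k) := by rw [mul_assoc, ← pow_add, add_comm k]

/-- The multinomial distribution with cell probabilities `cᵢ / ∑ c` has its mode at `c`. -/
theorem Nat.multinomial_mul_prod_pow_le {ι : Type*} (s : Finset ι) {k c : ι → ℕ}
    (hkc : ∑ i ∈ s, k i = ∑ i ∈ s, c i) :
    multinomial s k * ∏ i ∈ s, c i ^ k i ≤ multinomial s c * ∏ i ∈ s, c i ^ c i := by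
  have hpos : 0 < (∏ i ∈ s, (c i)!) * ∏ i ∈ s, (k i)! := by positivity
  refine Nat.le_of_mul_le_mul_right ?_ hpos
  calc (multinomial s k * ∏ i ∈ s, c i ^ k i) * ((∏ i ∈ s, (c i)!) * ∏ i ∈ s, (k i)!)
      = (∑ i ∈ s, k i)! * ∏ i ∈ s, ((c i)! * c i ^ k i) := by
        rw [← multinomial_spec, prod_mul_distrib]; ring
    _ ≤ (∑ i ∈ s, c i)! * ∏ i ∈ s, ((k i)! * c i ^ c i) := by
        rw [hkc]
        exact Nat.mul_le_mul_left _
          (prod_le_prod' fun i _ ↦ factorial_mul_pow_le_factorial_mul_pow _ _)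
    _ = (multinomial s c * ∏ i ∈ s, c i ^ c i) * ((∏ i ∈ s, (c i)!) * ∏ i ∈ s, (k i)!) := by
        rw [← multinomial_spec, prod_mul_distrib]; ring

theorem Nat.six_mul_add_three_choose_three (n : ℕ) :
    6 * (n + 3).choose 3 = (n + 3) * (n + 2) * (n + 1) := by
  rw [show 6 = (3 : ℕ)! from rfl, ← descFactorial_eq_factorial_mul_choose]
  simp only [descFactorial_succ, reduceSubDiff, Nat.add_one_sub_one, tsub_zero,
    descFactorial_zero, mul_one]
  ring

theorem Nat.add_three_choose_three_le_succ_pow (n : ℕ) : (n + 3).choose 3 ≤ (n + 1) ^ 3 := by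
  have h := six_mul_add_three_choose_three n
  have : (n + 3) * (n + 2) * (n + 1) ≤ 6 * (n + 1) ^ 3 := by
    nlinarith [Nat.zero_le (n * n * n), Nat.zero_le (n * n)]
  omega

theorem Nat.add_three_choose_three_le_pow {n : ℕ} (hn : 3 ≤ n) : (n + 3).choose 3 ≤ n ^ 3 := by
  have h := six_mul_add_three_choose_three n
  have : (n + 3) * (n + 2) * (n + 1) ≤ 6 * n ^ 3 := by
    nlinarith [Nat.mul_le_mul hn hn, Nat.mul_le_mul (Nat.mul_le_mul hn hn) hn]
  omega

open scoped ComplexOrder in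
theorem Matrix.PosSemidef.exists_eq_smul_add_one_sub_smul {ι 𝕜 : Type*} [Fintype ι] [RCLike 𝕜]
    {A B : Matrix ι ι 𝕜} {p : ℝ} (hA : A.PosSemidef) (hAtr : A.trace = 1) (hBtr : B.trace = 1)
    (hAB : (A - p • B).PosSemidef) :
    ∃ C : Matrix ι ι 𝕜, C.PosSemidef ∧ C.trace = 1 ∧ A = p • B + (1 - p) • C := by
  have htr : (A - p • B).trace = ((1 - p : ℝ) : 𝕜) := by
    simp [trace_sub, trace_smul, hAtr, hBtr, RCLike.real_smul_eq_coe_mul]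
  obtain rfl | hp := eq_or_ne p 1
  · have hBA : A = B := by
      rw [← sub_eq_zero, ← one_smul ℝ B, ← hAB.trace_eq_zero_iff, htr, sub_self,
        RCLike.ofReal_zero]
    exact ⟨A, hA, hAtr, by rw [sub_self, zero_smul, add_zero, one_smul, hBA]⟩
  have hpos : 0 < 1 - p := by
    have := hAB.trace_nonneg
    rw [htr, RCLike.ofReal_nonneg] at this
    exact lt_of_le_of_ne this (sub_ne_zero.mpr hp.symm).symm
  refine ⟨(1 - p)⁻¹ • (A - p • B), hAB.smul (inv_nonneg.mpr hpos.le), ?_, ?_⟩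
  · rw [trace_smul, htr, RCLike.real_smul_eq_coe_mul, ← RCLike.ofReal_mul,
      inv_mul_cancel₀ hpos.ne', RCLike.ofReal_one]
  · rw [smul_smul, mul_inv_cancel₀ hpos.ne', one_smul, add_sub_cancel]

section MultinomialProb

variable {ι : Type*} [Fintype ι]

noncomputable def multinomialProb (x : ι → ℝ) (k : ι → ℕ) : ℝ :=
  multinomial univ k * ∏ i, x i ^ k i

theorem sum_multinomialProb [DecidableEq ι] (x : ι → ℝ) (n : ℕ) :
    ∑ k ∈ piAntidiag univ n, multinomialProb x k = (∑ i, x i) ^ n :=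
  (sum_pow_eq_sum_piAntidiag univ x n).symm

variable {n : ℕ}

theorem sum_natCast_div_eq_one {c : ι → ℕ} (hn : 0 < n) (hc : ∑ i, c i = n) :
    ∑ i, (c i : ℝ) / n = 1 := by
  rw [← sum_div, div_eq_one_iff_eq (by positivity)]
  exact_mod_cast hc

theorem multinomialProb_div_eq (c : ι → ℕ) {k : ι → ℕ} (hk : ∑ i, k i = n) :
    multinomialProb (fun i ↦ (c i : ℝ) / n) k =
      ((multinomial univ k * ∏ i, c i ^ k i : ℕ) : ℝ) / (n : ℝ) ^ n := by
  simp only [multinomialProb, div_pow, prod_div_distrib, prod_pow_eq_pow_sum, hk]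
  push_cast
  ring

theorem multinomialProb_div_le {c k : ι → ℕ} (hc : ∑ i, c i = n) (hk : ∑ i, k i = n) :
    multinomialProb (fun i ↦ (c i : ℝ) / n) k ≤ multinomialProb (fun i ↦ (c i : ℝ) / n) c := by
  rw [multinomialProb_div_eq c hk, multinomialProb_div_eq c hc]
  gcongr ?_ / _
  exact_mod_cast multinomial_mul_prod_pow_le univ (hk.trans hc.symm)

theorem one_div_pow_le_multinomialProb {c : ι → ℕ} (hc : ∑ i, c i = n) :
    1 / (n : ℝ) ^ n ≤ multinomialProb (fun i ↦ (c i : ℝ) / n) c := by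
  rw [multinomialProb_div_eq c hc]
  gcongr
  exact_mod_cast Nat.mul_pos (multinomial_pos _ _) (prod_pos fun i _ ↦ Nat.pow_self_pos)

/-- The mode of a distribution on a finite set has at least the average probability. -/
theorem one_le_card_piAntidiag_mul_multinomialProb [DecidableEq ι] {c : ι → ℕ} (hn : 0 < n)
    (hc : ∑ i, c i = n) :
    1 ≤ #(piAntidiag (univ : Finset ι) n) * multinomialProb (fun i ↦ (c i : ℝ) / n) c := by
  calc (1 : ℝ) = ∑ k ∈ piAntidiag univ n, multinomialProb (fun i ↦ (c i : ℝ) / n) k := by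
        rw [sum_multinomialProb, sum_natCast_div_eq_one hn hc, one_pow]
    _ ≤ #(piAntidiag (univ : Finset ι) n) • multinomialProb (fun i ↦ (c i : ℝ) / n) c :=
        sum_le_card_nsmul _ _ _ fun k hk ↦ multinomialProb_div_le hc (mem_piAntidiag.mp hk).1
    _ = _ := nsmul_eq_mul _ _

end MultinomialProb

section BellDiagonal

variable {n : ℕ} {c : Fin 4 → ℕ}

theorem one_le_choose_mul_multinomialProb (hn : 0 < n) (hc : ∑ i, c i = n) :
    1 ≤ ((n + 3).choose 3 : ℝ) * multinomialProb (fun i ↦ (c i : ℝ) / n) c := by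
  have h := one_le_card_piAntidiag_mul_multinomialProb hn hc
  rwa [card_piAntidiag_univ, Fintype.card_fin, show 4 + n - 1 = n + 3 by omega,
    choose_symm_add] at h

theorem one_div_le_multinomialProb_of_choose_le (hn : 0 < n) (hc : ∑ i, c i = n) {b : ℝ}
    (hb : ((n + 3).choose 3 : ℝ) ≤ b) :
    1 / b ≤ multinomialProb (fun i ↦ (c i : ℝ) / n) c := by
  have hprob := one_le_choose_mul_multinomialProb hn hc
  have hprob_pos : 0 < multinomialProb (fun i ↦ (c i : ℝ) / n) c :=
    (by positivity : (0 : ℝ) < 1 / (n : ℝ) ^ n).trans_le (one_div_pow_le_multinomialProb hc)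
  rw [div_le_iff₀ (by nlinarith)]
  nlinarith

theorem one_div_add_one_pow_three_le_multinomialProb (hn : 0 < n) (hc : ∑ i, c i = n) :
    1 / ((n : ℝ) + 1) ^ 3 ≤ multinomialProb (fun i ↦ (c i : ℝ) / n) c :=
  one_div_le_multinomialProb_of_choose_le hn hc
    (by exact_mod_cast add_three_choose_three_le_succ_pow n)

theorem one_div_pow_three_le_multinomialProb (hn : 2 ≤ n) (hc : ∑ i, c i = n) :
    1 / (n : ℝ) ^ 3 ≤ multinomialProb (fun i ↦ (c i : ℝ) / n) c := by
  rcases hn.eq_or_lt with rfl | hn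
  · have h := one_div_pow_le_multinomialProb hc
    norm_num at h ⊢
    linarith
  · exact one_div_le_multinomialProb_of_choose_le (by omega) hc
      (by exact_mod_cast add_three_choose_three_le_pow hn)

theorem multinomial_mul_rhoSym_weight (hc : ∑ i, c i = n) :
    (multinomial univ c : ℝ) * (((∏ i, (c i)! : ℕ) : ℝ) / (n ! : ℝ)) = 1 := by
  rw [mul_div_assoc', div_eq_one_iff_eq (by positivity), mul_comm]
  exact_mod_cast hc ▸ multinomial_spec univ c

theorem sigmaPow_posSemidef : (sigmaPow n c).PosSemidef :=
  PosSemidef.diagonal fun w ↦ prod_nonneg fun j _ ↦ by positivity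

theorem trace_sigmaPow (hn : 0 < n) (hc : ∑ i, c i = n) : (sigmaPow n c).trace = 1 := by
  rw [sigmaPow, trace_diagonal]
  exact (Fintype.sum_pow (fun i ↦ (c i : ℝ) / n) n).symm.trans (by rw [sum_natCast_div_eq_one hn hc, one_pow])

theorem trace_rhoSym (hc : ∑ i, c i = n) : (rhoSym n c).trace = 1 := by
  have hcount : #{w : Fin n → Fin 4 | typeOf w = c} = multinomial univ c :=
    card_filter_fiberCard_eq_multinomial c (by rw [hc, Fintype.card_fin])
  rw [rhoSym, trace_diagonal, ← sum_filter, sum_const, hcount, nsmul_eq_mul,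
    multinomial_mul_rhoSym_weight hc]

theorem sigmaPow_sub_smul_rhoSym_posSemidef (hc : ∑ i, c i = n) :
    (sigmaPow n c - multinomialProb (fun i ↦ (c i : ℝ) / n) c • rhoSym n c).PosSemidef := by
  rw [sigmaPow, rhoSym, ← diagonal_smul, diagonal_sub]
  refine PosSemidef.diagonal fun w ↦ ?_
  simp only [Pi.zero_apply, Pi.smul_apply, smul_eq_mul, sub_nonneg]
  split_ifs with hw
  · rw [multinomialProb, mul_right_comm, multinomial_mul_rhoSym_weight hc, one_mul,
      prod_comp_eq_prod_pow_card_fiber (fun i ↦ (c i : ℝ) / n) w]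
    exact le_of_eq (congrArg (fun t : Fin 4 → ℕ ↦ ∏ i, ((c i : ℝ) / n) ^ t i) hw.symm)
  · rw [mul_zero]
    exact prod_nonneg fun j _ ↦ by positivity

end BellDiagonal

/-- De Finetti-type decomposition (Lemma 1 ingredient): `σ^{⊗n} = p ρ_n + (1−p) ρ̃_n`
with `p = multinomial(n; n₁,…,n₄) ∏ᵢ (nᵢ/n)^{nᵢ}`, `ρ̃_n` a positive semidefinite operator
of trace 1, and `p ≥ 1/(n+1)³` (in particular `p ≥ 1/n³` for `n ≥ 2`). -/
theorem sigma_pow_decomposition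
    (n : ℕ) (c : Fin 4 → ℕ) (hn : 0 < n) (hc : ∑ i, c i = n)
    (p : ℝ) (hp : p = (Nat.multinomial Finset.univ c : ℝ) * ∏ i, ((c i : ℝ) / n) ^ (c i)) :
    ∃ ρt : Matrix (Fin n → Fin 4) (Fin n → Fin 4) ℝ,
      ρt.PosSemidef ∧ ρt.trace = 1 ∧
      sigmaPow n c = p • rhoSym n c + (1 - p) • ρt ∧
      1 / ((n : ℝ) + 1) ^ 3 ≤ p ∧ (2 ≤ n → 1 / (n : ℝ) ^ 3 ≤ p) := by
  change p = multinomialProb (fun i ↦ (c i : ℝ) / n) c at hp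
  subst hp
  obtain ⟨ρt, hρt, htrace, hdecomp⟩ := sigmaPow_posSemidef.exists_eq_smul_add_one_sub_smul
    (trace_sigmaPow hn hc) (trace_rhoSym hc) (sigmaPow_sub_smul_rhoSym_posSemidef hc)
  exact ⟨ρt, hρt, htrace, hdecomp, one_div_add_one_pow_three_le_multinomialProb hn hc,
    fun hn2 ↦ one_div_pow_three_le_multinomialProb hn2 hc⟩
end

section
/- Under the SARG constraints R₁(1−Q₁) ≤ p₁/4, R₂(1−Q₂) ≤ p₂/4, R₁(1−Q₁) + R₂(1−Q₂) ≥ C := R_μ(1−Q_μ) − (1/4)Σ_{n≥3} p_n, and R₁Q₁ + R₂Q₂ ≤ R_μQ_μ: if C > 0 and the functions S₁, S₂ are nonnegative and nonincreasing on their domains, then there exists a minimizer of R₁S₁(Q₁) + R₂S₂(Q₂) over the feasible set satisfying R₁(1−Q₁) + R₂(1−Q₂) = C (i.e., the third constraint is tight at the optimum). -/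
/-!
Shrinking both yields `R₁, R₂` by the common factor `t = C / (R₁(1−Q₁) + R₂(1−Q₂)) ∈ (0, 1]`
keeps the error rates, makes the third constraint tight, can only relax the other three, and
multiplies the nonnegative objective by `t ≤ 1`. So every feasible value dominates a value
attained on the boundary, and the two infima agree.
-/

lemma exists_mem_Icc_mul_eq_of_le {C A : ℝ} (hC : 0 < C) (hCA : C ≤ A) :
    ∃ t ∈ Set.Icc (0 : ℝ) 1, t * A = C := by
  have hA : 0 < A := hC.trans_le hCA
  exact ⟨C / A, ⟨by positivity, (div_le_one hA).2 hCA⟩, div_mul_cancel₀ C hA.ne'⟩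

lemma mul_le_of_mem_Icc_of_le {t x b : ℝ} (ht : t ∈ Set.Icc (0 : ℝ) 1) (hx : 0 ≤ x)
    (hxb : x ≤ b) : t * x ≤ b :=
  (mul_le_of_le_one_left hx ht.2).trans hxb

theorem sarg_wcp_third_constraint_tight_general
    (p1 p2 RmuQmu C : ℝ) (hC : 0 < C)
    (S1 S2 : ℝ → ℝ)
    (hS1n : ∀ x ∈ Set.Icc (0 : ℝ) 1, 0 ≤ S1 x)
    (hS2n : ∀ x ∈ Set.Icc (0 : ℝ) 1, 0 ≤ S2 x) :
    sInf {r : ℝ | ∃ R1 Q1 R2 Q2 : ℝ,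
        0 ≤ R1 ∧ 0 ≤ R2 ∧ 0 ≤ Q1 ∧ Q1 ≤ 1 ∧ 0 ≤ Q2 ∧ Q2 ≤ 1 ∧
        R1 * (1 - Q1) ≤ p1 / 4 ∧ R2 * (1 - Q2) ≤ p2 / 4 ∧
        C ≤ R1 * (1 - Q1) + R2 * (1 - Q2) ∧
        R1 * Q1 + R2 * Q2 ≤ RmuQmu ∧
        r = R1 * S1 Q1 + R2 * S2 Q2}
    = sInf {r : ℝ | ∃ R1 Q1 R2 Q2 : ℝ,
        0 ≤ R1 ∧ 0 ≤ R2 ∧ 0 ≤ Q1 ∧ Q1 ≤ 1 ∧ 0 ≤ Q2 ∧ Q2 ≤ 1 ∧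
        R1 * (1 - Q1) ≤ p1 / 4 ∧ R2 * (1 - Q2) ≤ p2 / 4 ∧
        R1 * (1 - Q1) + R2 * (1 - Q2) = C ∧
        R1 * Q1 + R2 * Q2 ≤ RmuQmu ∧
        r = R1 * S1 Q1 + R2 * S2 Q2} := by
  refine csInf_eq_csInf_of_forall_exists_le ?_ ?_
  · rintro r ⟨R1, Q1, R2, Q2, hR1, hR2, hQ1, hQ1', hQ2, hQ2', h1, h2, hsum, herr, rfl⟩
    obtain ⟨t, ht, htC⟩ := exists_mem_Icc_mul_eq_of_le hC hsum
    have hS1 := hS1n Q1 ⟨hQ1, hQ1'⟩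
    have hS2 := hS2n Q2 ⟨hQ2, hQ2'⟩
    have hx1 : 0 ≤ R1 * (1 - Q1) := mul_nonneg hR1 (by linarith)
    have hx2 : 0 ≤ R2 * (1 - Q2) := mul_nonneg hR2 (by linarith)
    refine ⟨t * (R1 * S1 Q1 + R2 * S2 Q2), ⟨t * R1, Q1, t * R2, Q2,
      mul_nonneg ht.1 hR1, mul_nonneg ht.1 hR2, hQ1, hQ1', hQ2, hQ2', ?_, ?_, ?_, ?_, by ring⟩,
      mul_le_of_mem_Icc_of_le ht (by positivity) le_rfl⟩
    · rw [mul_assoc]; exact mul_le_of_mem_Icc_of_le ht hx1 h1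
    · rw [mul_assoc]; exact mul_le_of_mem_Icc_of_le ht hx2 h2
    · linear_combination htC
    · have herr' := mul_le_of_mem_Icc_of_le ht (by positivity) herr
      linarith
  · rintro r ⟨R1, Q1, R2, Q2, hR1, hR2, hQ1, hQ1', hQ2, hQ2', h1, h2, hsum, herr, hr⟩
    exact ⟨r, ⟨R1, Q1, R2, Q2, hR1, hR2, hQ1, hQ1', hQ2, hQ2', h1, h2, hsum.ge, herr, hr⟩, le_rfl⟩

/-- SARG weak-coherent-pulse optimization: under the constraints
`R₁(1−Q₁) ≤ p₁/4`, `R₂(1−Q₂) ≤ p₂/4`, `R₁(1−Q₁) + R₂(1−Q₂) ≥ C`, `R₁Q₁ + R₂Q₂ ≤ R_μQ_μ`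
(with `R₁, R₂ ≥ 0`, `Q₁, Q₂ ∈ [0,1]`), if `C > 0` and `S₁, S₂` are nonnegative and
nonincreasing on `[0,1]`, then the infimum of `R₁S₁(Q₁) + R₂S₂(Q₂)` over the feasible set
is not changed by additionally requiring the third constraint to be tight, i.e. the
optimum is attained (in the infimum sense) on `R₁(1−Q₁) + R₂(1−Q₂) = C`. -/
theorem sarg_wcp_third_constraint_tight
    (p1 p2 RmuQmu C : ℝ) (hC : 0 < C) (hRQ : 0 ≤ RmuQmu)
    (S1 S2 : ℝ → ℝ)
    (hS1n : ∀ x ∈ Set.Icc (0 : ℝ) 1, 0 ≤ S1 x)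
    (hS2n : ∀ x ∈ Set.Icc (0 : ℝ) 1, 0 ≤ S2 x)
    (hS1a : AntitoneOn S1 (Set.Icc (0 : ℝ) 1))
    (hS2a : AntitoneOn S2 (Set.Icc (0 : ℝ) 1)) :
    sInf {r : ℝ | ∃ R1 Q1 R2 Q2 : ℝ,
        0 ≤ R1 ∧ 0 ≤ R2 ∧ 0 ≤ Q1 ∧ Q1 ≤ 1 ∧ 0 ≤ Q2 ∧ Q2 ≤ 1 ∧
        R1 * (1 - Q1) ≤ p1 / 4 ∧ R2 * (1 - Q2) ≤ p2 / 4 ∧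
        C ≤ R1 * (1 - Q1) + R2 * (1 - Q2) ∧
        R1 * Q1 + R2 * Q2 ≤ RmuQmu ∧
        r = R1 * S1 Q1 + R2 * S2 Q2}
    = sInf {r : ℝ | ∃ R1 Q1 R2 Q2 : ℝ,
        0 ≤ R1 ∧ 0 ≤ R2 ∧ 0 ≤ Q1 ∧ Q1 ≤ 1 ∧ 0 ≤ Q2 ∧ Q2 ≤ 1 ∧
        R1 * (1 - Q1) ≤ p1 / 4 ∧ R2 * (1 - Q2) ≤ p2 / 4 ∧
        R1 * (1 - Q1) + R2 * (1 - Q2) = C ∧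
        R1 * Q1 + R2 * Q2 ≤ RmuQmu ∧
        r = R1 * S1 Q1 + R2 * S2 Q2} :=
  sarg_wcp_third_constraint_tight_general p1 p2 RmuQmu C hC S1 S2 hS1n hS2n
end
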